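/- arXiv:1304.5052 — 2 statements merged into one kernel-verified Lean document; each statement's English description precedes it below -/
import Mathlib

section
/- (Gordeev's example: Thompson's conjecture fails for the finitary alternating group.) Let σ be a permutation of ℕ whose set of moved points {x : σ(x) ≠ x} is finite. Then there exists a permutation h of ℕ with finite set of moved points such that h² is not a product of two conjugates of σ: for all permutations τ_1, τ_2 of ℕ, h² ≠ (τ_1 σ τ_1^{-1}) · (τ_2 σ τ_2^{-1}). (Since the square of a finitely supported permutation is an even finitary permutation, h² lies in the finitary alternating group, so no conjugacy class C of the finitary alternating group satisfies C² = G.) -/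
/-!
A product of two conjugates of `σ` moves at most twice as many points as `σ` does, since the
points moved by a conjugate `τ σ τ⁻¹` are the `τ`-image of those moved by `σ`. On the other
hand, the square of a cycle of length `m ≥ 3` still moves all `m` points, so a cycle of length
greater than twice the number of points moved by `σ` gives the required `h`.
-/

open MulAction Pointwise

section MovedPoints

variable {M G α : Type*}

theorem compl_fixedBy_mul_subset [Monoid M] [MulAction M α] (g h : M) :
    (fixedBy α (g * h))ᶜ ⊆ (fixedBy α g)ᶜ ∪ (fixedBy α h)ᶜ := by
  rw [← Set.compl_inter]
  exact Set.compl_subset_compl.mpr (fixedBy_mul α g h)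

theorem ncard_compl_fixedBy_mul_le [Monoid M] [MulAction M α] {g h : M}
    (hg : (fixedBy α g)ᶜ.Finite) (hh : (fixedBy α h)ᶜ.Finite) :
    (fixedBy α (g * h))ᶜ.ncard ≤ (fixedBy α g)ᶜ.ncard + (fixedBy α h)ᶜ.ncard :=
  (Set.ncard_le_ncard (compl_fixedBy_mul_subset g h) (hg.union hh)).trans
    (Set.ncard_union_le _ _)

variable [Group G] [MulAction G α]

theorem compl_fixedBy_conj (g τ : G) : (fixedBy α (τ * g * τ⁻¹))ᶜ = τ • (fixedBy α g)ᶜ := by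
  rw [← smul_fixedBy, Set.smul_set_compl]

theorem ncard_compl_fixedBy_conj_mul_conj_le {g : G} (hg : (fixedBy α g)ᶜ.Finite) (τ₁ τ₂ : G) :
    (fixedBy α (τ₁ * g * τ₁⁻¹ * (τ₂ * g * τ₂⁻¹)))ᶜ.ncard ≤ 2 * (fixedBy α g)ᶜ.ncard := by
  have hfinite (τ : G) : (fixedBy α (τ * g * τ⁻¹))ᶜ.Finite := by
    rw [compl_fixedBy_conj]
    exact hg.smul_set
  have hncard (τ : G) : (fixedBy α (τ * g * τ⁻¹))ᶜ.ncard = (fixedBy α g)ᶜ.ncard := by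
    rw [compl_fixedBy_conj, Set.ncard_smul_set]
  calc _ ≤ _ := ncard_compl_fixedBy_mul_le (hfinite τ₁) (hfinite τ₂)
    _ = 2 * (fixedBy α g)ᶜ.ncard := by rw [hncard, hncard, two_mul]

end MovedPoints

theorem formPerm_range_apply_of_le {k x : ℕ} (hx : k ≤ x) : (List.range k).formPerm x = x :=
  List.formPerm_apply_of_notMem (by simpa using hx)

theorem formPerm_range_pow_apply {k x : ℕ} (n : ℕ) (hx : x < k) :
    ((List.range k).formPerm ^ n) x = (x + n) % k := by
  have h := List.formPerm_pow_apply_getElem _ List.nodup_range n x (by simpa using hx)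
  simpa only [List.getElem_range, List.length_range] using h

theorem formPerm_range_sq_apply_ne {k x : ℕ} (hk : 3 ≤ k) (hx : x < k) :
    ((List.range k).formPerm ^ 2) x ≠ x := by
  intro hfix
  have hmod : x + 2 ≡ x + 0 [MOD k] := by
    rw [formPerm_range_pow_apply 2 hx] at hfix
    rw [Nat.ModEq, hfix, add_zero, Nat.mod_eq_of_lt hx]
  have hdvd : k ∣ 2 := Nat.modEq_zero_iff_dvd.mp (Nat.ModEq.add_left_cancel' x hmod)
  exact absurd (Nat.le_of_dvd two_pos hdvd) (by omega)

theorem setOf_formPerm_range_apply_ne_subset (k : ℕ) :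
    {x | (List.range k).formPerm x ≠ x} ⊆ Set.Iio k := fun _ hx =>
  Set.mem_Iio.mpr <| not_le.mp fun hle => hx (formPerm_range_apply_of_le hle)

theorem setOf_formPerm_range_sq_apply_ne {k : ℕ} (hk : 3 ≤ k) :
    {x | ((List.range k).formPerm ^ 2) x ≠ x} = Set.Iio k := by
  refine Set.Subset.antisymm (fun x hx => Set.mem_Iio.mpr <| not_le.mp fun hle => hx ?_)
    fun x hx => formPerm_range_sq_apply_ne hk hx
  rw [pow_two, Equiv.Perm.mul_apply, formPerm_range_apply_of_le hle,
    formPerm_range_apply_of_le hle]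

/-- Gordeev's example: for any finitely supported permutation `σ` of `ℕ`
there is a finitely supported permutation `h` such that `h²` is not a product of two
conjugates of `σ`. Hence Thompson's conjecture fails for the finitary alternating
group. -/
theorem thompson_fails_finitary_alternating
    (σ : Equiv.Perm ℕ) (hσ : {x : ℕ | σ x ≠ x}.Finite) :
    ∃ h : Equiv.Perm ℕ, {x : ℕ | h x ≠ x}.Finite ∧
      ∀ τ₁ τ₂ : Equiv.Perm ℕ, h ^ 2 ≠ (τ₁ * σ * τ₁⁻¹) * (τ₂ * σ * τ₂⁻¹) := by
  set n := {x : ℕ | σ x ≠ x}.ncard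
  refine ⟨(List.range (2 * n + 3)).formPerm,
    (Set.finite_Iio _).subset (setOf_formPerm_range_apply_ne_subset _), fun τ₁ τ₂ heq => ?_⟩
  have hle := ncard_compl_fixedBy_conj_mul_conj_le (α := ℕ) (g := σ) hσ τ₁ τ₂
  rw [← heq] at hle
  change {x | ((List.range (2 * n + 3)).formPerm ^ 2) x ≠ x}.ncard ≤ 2 * n at hle
  rw [setOf_formPerm_range_sq_apply_ne (by omega), Set.ncard_Iio_nat] at hle
  omega
end

section
/- Let S be the subgroup of the permutation group of ℕ consisting of all finitely supported permutations (those moving only finitely many points). Then every element of the commutator subgroup of S is a single commutator: for every g in the commutator subgroup of S there exist a, b ∈ S with g = a b a^{-1} b^{-1}. -/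
/-- The subgroup `S` of the permutation group of `ℕ` consisting of the finitely
supported permutations. -/
def finitaryPermGroup : Subgroup (Equiv.Perm ℕ) where
  carrier := {σ : Equiv.Perm ℕ | {x : ℕ | σ x ≠ x}.Finite}
  one_mem' := by
    have : {x : ℕ | (1 : Equiv.Perm ℕ) x ≠ x} = ∅ := by
      ext x; simp
    simp only [Set.mem_setOf_eq, this]
    exact Set.finite_empty
  mul_mem' := by
    intro a b ha hb
    refine Set.Finite.subset (hb.union (ha.preimage (Set.injOn_of_injective b.injective)))
      fun x hx => ?_
    simp only [Set.mem_setOf_eq, Equiv.Perm.mul_apply] at hx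
    by_cases h : b x = x
    · right
      simp only [Set.mem_preimage, Set.mem_setOf_eq, h]
      simpa [h] using hx
    · left
      exact h
  inv_mem' := by
    intro a ha
    have : {x : ℕ | a⁻¹ x ≠ x} = {x : ℕ | a x ≠ x} := by
      ext x
      simp only [Set.mem_setOf_eq, ne_eq]
      constructor
      · intro h hax
        exact h (by rw [← hax, show a⁻¹ (a x) = x from a.symm_apply_apply x]; exact hax.symm)
      · intro h hax
        exact h (by rw [← hax, show a (a⁻¹ x) = x from a.apply_symm_apply x]; exact hax.symm)
    simpa only [Set.mem_setOf_eq, this] using ha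

/-!
A finitely supported permutation in the commutator subgroup is an even permutation of some
finite set, so it suffices to show that every even permutation `σ` of a finite type is a
commutator. Each `m`-cycle is a product of two reflections of the `m`-gon, whose supports have
the same size when `m` is odd and sizes differing by `2` when `m` is even; since `σ` has an even
number of even-length cycles, these can be paired off so that `σ = u * v` with `u`, `v`
involutions of equal support size. Such involutions are conjugate, `v = c * u * c⁻¹`, and then
`σ = ⁅u, c⁆` because `u⁻¹ = u`.
-/

open Equiv Equiv.Perm Finset

theorem mul_mem_commutatorSet_of_isConj {G : Type*} [Group G] {u v : G} (hu : u ^ 2 = 1)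
    (huv : IsConj u v) : u * v ∈ commutatorSet G := by
  obtain ⟨c, rfl⟩ := isConj_iff.mp huv
  refine ⟨u, c, ?_⟩
  rw [commutatorElement_def, inv_eq_of_mul_eq_one_right (pow_two u ▸ hu)]
  group

theorem Subgroup.commutator_iSup_le_of_directed {G ι : Type*} [Group G] [Nonempty ι]
    {H : ι → Subgroup G} (hH : Directed (· ≤ ·) H) :
    ⁅⨆ i, H i, ⨆ i, H i⁆ ≤ ⨆ i, ⁅H i, H i⁆ := by
  rw [commutator_le]
  intro a ha b hb
  obtain ⟨i, hi⟩ := (mem_iSup_of_directed hH).mp ha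
  obtain ⟨j, hj⟩ := (mem_iSup_of_directed hH).mp hb
  obtain ⟨k, hik, hjk⟩ := hH i j
  exact mem_iSup_of_mem k (commutator_mem_commutator (hik hi) (hjk hj))

namespace Equiv.Perm

section Fintype

variable {α β : Type*} [Fintype α] [DecidableEq α] [Fintype β] [DecidableEq β]

def HasInvolutionFactorization (σ : Perm β) (d : ℤ) : Prop :=
  ∃ u v : Perm β, u ^ 2 = 1 ∧ v ^ 2 = 1 ∧ u * v = σ ∧ u.support ⊆ σ.support ∧
    v.support ⊆ σ.support ∧ (#u.support : ℤ) = #v.support + d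

namespace HasInvolutionFactorization

variable {σ τ : Perm β} {d d' : ℤ}

/-- `u * v = (u * v * u⁻¹) * u`, and `u * v * u⁻¹` has the support size of `v`. -/
theorem neg (h : HasInvolutionFactorization σ d) : HasInvolutionFactorization σ (-d) := by
  obtain ⟨u, v, hu, hv, rfl, hus, hvs, hd⟩ := h
  refine ⟨u * v * u⁻¹, u, by rw [conj_pow, hv, mul_one, mul_inv_cancel], hu, by group,
    (support_mul_le _ _).trans ?_, hus, ?_⟩
  · rw [support_inv]
    exact sup_le le_rfl hus
  · rw [card_support_conj]
    linarith

theorem conj (h : HasInvolutionFactorization σ d) (g : Perm β) :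
    HasInvolutionFactorization (g * σ * g⁻¹) d := by
  obtain ⟨u, v, hu, hv, rfl, hus, hvs, hd⟩ := h
  refine ⟨g * u * g⁻¹, g * v * g⁻¹, by rw [conj_pow, hu, mul_one, mul_inv_cancel],
    by rw [conj_pow, hv, mul_one, mul_inv_cancel], by group, ?_, ?_, ?_⟩
  · simpa only [support_conj] using map_subset_map.mpr hus
  · simpa only [support_conj] using map_subset_map.mpr hvs
  · simpa only [card_support_conj] using hd

theorem extendDomain {p : β → Prop} [DecidablePred p] (f : α ≃ Subtype p) {σ : Perm α}
    (h : HasInvolutionFactorization σ d) :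
    HasInvolutionFactorization (σ.extendDomain f) d := by
  obtain ⟨u, v, hu, hv, rfl, hus, hvs, hd⟩ := h
  refine ⟨u.extendDomain f, v.extendDomain f, ?_, ?_, extendDomain_mul f u v, ?_, ?_, ?_⟩
  · rw [pow_two, extendDomain_mul, ← pow_two, hu, extendDomain_one]
  · rw [pow_two, extendDomain_mul, ← pow_two, hv, extendDomain_one]
  · simpa only [support_extend_domain] using map_subset_map.mpr hus
  · simpa only [support_extend_domain] using map_subset_map.mpr hvs
  · simpa only [card_support_extend_domain] using hd

theorem mul_of_disjoint (hσ : HasInvolutionFactorization σ d)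
    (hτ : HasInvolutionFactorization τ d') (hστ : Disjoint σ τ) :
    HasInvolutionFactorization (σ * τ) (d + d') := by
  obtain ⟨u, v, hu, hv, rfl, hus, hvs, hd⟩ := hσ
  obtain ⟨u', v', hu', hv', rfl, hus', hvs', hd'⟩ := hτ
  have huu' : Disjoint u u' := hστ.mono hus hus'
  have hvv' : Disjoint v v' := hστ.mono hvs hvs'
  have hvu' : Disjoint v u' := hστ.mono hvs hus'
  refine ⟨u * u', v * v', by rw [huu'.commute.mul_pow, hu, hu', mul_one],
    by rw [hvv'.commute.mul_pow, hv, hv', mul_one], (hvu'.commute.mul_mul_mul_comm u v').symm,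
    ?_, ?_, ?_⟩
  · rw [hστ.support_mul]
    exact (support_mul_le u u').trans (union_subset_union hus hus')
  · rw [hστ.support_mul]
    exact (support_mul_le v v').trans (union_subset_union hvs hvs')
  · rw [huu'.card_support_mul, hvv'.card_support_mul]
    push_cast
    linarith

end HasInvolutionFactorization

section Rotation

variable {n : ℕ}

theorem revPerm_mul_finRotate_sq : (Fin.revPerm * finRotate (n + 2)) ^ 2 = 1 := by
  ext x
  simp only [pow_two, Perm.mul_apply, finRotate_apply, Fin.revPerm_apply, ← Fin.last_sub,
    Perm.one_apply]
  abel_nf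

theorem support_revPerm_of_even (hn : Even n) :
    (Fin.revPerm : Perm (Fin (n + 2))).support = univ := by
  obtain ⟨k, rfl⟩ := hn
  ext x
  simp only [mem_support, Fin.revPerm_apply, ne_eq, Fin.ext_iff, Fin.val_rev, mem_univ, iff_true]
  omega

theorem support_revPerm_of_odd (hn : Odd n) :
    (Fin.revPerm : Perm (Fin (n + 2))).support = {⟨(n + 1) / 2, by omega⟩}ᶜ := by
  obtain ⟨k, rfl⟩ := hn
  ext x
  simp only [mem_support, Fin.revPerm_apply, ne_eq, Fin.ext_iff, Fin.val_rev, mem_compl,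
    mem_singleton]
  omega

theorem support_revPerm_mul_finRotate_of_even (hn : Even n) :
    (Fin.revPerm * finRotate (n + 2)).support = {Fin.last _, ⟨n / 2, by omega⟩}ᶜ := by
  obtain ⟨k, rfl⟩ := hn
  ext x
  simp only [mem_support, Perm.coe_mul, Function.comp_apply, finRotate_apply, Fin.revPerm_apply,
    ne_eq, Fin.ext_iff, Fin.val_rev, Fin.val_add_one, Fin.val_last, mem_compl, mem_insert,
    mem_singleton]
  split_ifs <;> omega

theorem support_revPerm_mul_finRotate_of_odd (hn : Odd n) :
    (Fin.revPerm * finRotate (n + 2)).support = {Fin.last _}ᶜ := by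
  obtain ⟨k, rfl⟩ := hn
  ext x
  simp only [mem_support, Perm.coe_mul, Function.comp_apply, finRotate_apply, Fin.revPerm_apply,
    ne_eq, Fin.ext_iff, Fin.val_rev, Fin.val_add_one, Fin.val_last, mem_compl, mem_singleton]
  split_ifs <;> omega

end Rotation

/-- The two reflections are `x ↦ -1 - x` and `x ↦ -2 - x` of `Fin (n + 2) = ℤ/(n + 2)`. -/
theorem hasInvolutionFactorization_finRotate (n : ℕ) :
    HasInvolutionFactorization (finRotate (n + 2)) (1 - sign (finRotate (n + 2))) := by
  have hrev : (Fin.revPerm : Perm (Fin (n + 2))) ^ 2 = 1 := by ext; simp [pow_two]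
  refine ⟨Fin.revPerm, Fin.revPerm * finRotate (n + 2), hrev, revPerm_mul_finRotate_sq,
    by rw [← mul_assoc, ← pow_two, hrev, one_mul], by simp [support_finRotate],
    by simp [support_finRotate], ?_⟩
  rw [sign_finRotate]
  rcases n.even_or_odd with hn | hn
  · rw [support_revPerm_of_even hn, support_revPerm_mul_finRotate_of_even hn, card_compl,
      card_pair (by simp [Fin.ext_iff]; omega)]
    simp [pow_succ, hn.neg_one_pow]
  · rw [support_revPerm_of_odd hn, support_revPerm_mul_finRotate_of_odd hn]
    simp [card_compl, pow_succ, hn.neg_one_pow]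

theorem IsCycle.hasInvolutionFactorization {σ : Perm β} (hσ : σ.IsCycle) :
    HasInvolutionFactorization σ (1 - Perm.sign σ) := by
  obtain ⟨n, hn⟩ := Nat.exists_eq_add_of_le' hσ.two_le_card_support
  let f : Fin (n + 2) ≃ σ.support :=
    Fintype.equivOfCardEq (by rw [Fintype.card_fin, Fintype.card_coe, hn])
  have hconj : IsConj ((finRotate (n + 2)).extendDomain f) σ :=
    (isCycle_finRotate.extendDomain f).isConj hσ
      (by rw [card_support_extend_domain, support_finRotate, card_univ, Fintype.card_fin, hn])
  obtain ⟨g, hg⟩ := _root_.isConj_iff.mp hconj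
  rw [← hg, map_mul, map_mul, map_inv, mul_inv_cancel_comm, sign_extendDomain]
  exact ((hasInvolutionFactorization_finRotate n).extendDomain f).conj g

/-- `1 - sign σ` is additive over disjoint factors unless both are odd (`2 + 2`); then the
factorization of one of them is reversed by `neg` to get `2 - 2`. -/
theorem hasInvolutionFactorization_one_sub_sign (σ : Perm β) :
    HasInvolutionFactorization σ (1 - sign σ) := by
  induction σ using cycle_induction_on with
  | base_one => exact ⟨1, 1, one_pow 2, one_pow 2, mul_one 1, by simp, by simp, by simp⟩
  | base_cycles σ hσ => exact hσ.hasInvolutionFactorization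
  | induction_disjoint σ τ hστ _ hσ hτ =>
    rw [map_mul, Units.val_mul]
    rcases Int.units_eq_one_or (sign τ) with hτ₁ | hτ₁
    · simpa [hτ₁] using hσ.mul_of_disjoint hτ hστ
    rcases Int.units_eq_one_or (sign σ) with hσ₁ | hσ₁
    · simpa [hσ₁, hτ₁] using hσ.mul_of_disjoint hτ hστ
    · simpa [hσ₁, hτ₁] using hσ.mul_of_disjoint hτ.neg hστ

theorem cycleType_eq_replicate_of_sq_eq_one {u : Perm β} (hu : u ^ 2 = 1) :
    u.cycleType = Multiset.replicate (#u.support / 2) 2 := by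
  have hmem : ∀ m ∈ u.cycleType, m = 2 := fun m hm =>
    le_antisymm
      (Nat.le_of_dvd two_pos ((dvd_of_mem_cycleType hm).trans (orderOf_dvd_of_pow_eq_one hu)))
      (two_le_of_mem_cycleType hm)
  rw [Multiset.eq_replicate_card.mpr hmem, ← sum_cycleType, Multiset.eq_replicate_card.mpr hmem]
  simp

theorem isConj_of_sq_eq_one {u v : Perm β} (hu : u ^ 2 = 1) (hv : v ^ 2 = 1)
    (h : #u.support = #v.support) : IsConj u v := by
  rw [isConj_iff_cycleType_eq, cycleType_eq_replicate_of_sq_eq_one hu,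
    cycleType_eq_replicate_of_sq_eq_one hv, h]

theorem mem_commutatorSet_of_sign_eq_one {σ : Perm β} (hσ : sign σ = 1) :
    σ ∈ commutatorSet (Perm β) := by
  obtain ⟨u, v, hu, hv, rfl, -, -, huv⟩ := hasInvolutionFactorization_one_sub_sign σ
  rw [hσ, Units.val_one, sub_self, add_zero] at huv
  exact mul_mem_commutatorSet_of_isConj hu (isConj_of_sq_eq_one hu hv (by exact_mod_cast huv))

end Fintype

theorem mem_range_ofSubtype {α : Type*} {p : α → Prop} [DecidablePred p] {π : Perm α}
    (h : ∀ a, ¬p a → π a = a) : π ∈ (ofSubtype : Perm (Subtype p) →* Perm α).range :=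
  ⟨_, congrArg Subtype.val ((Perm.subtypeEquivSubtypePerm p).apply_symm_apply ⟨π, h⟩)⟩

theorem monotone_range_ofSubtype {α : Type*} [DecidableEq α] :
    Monotone fun s : Finset α => (ofSubtype : Perm s →* Perm α).range := by
  rintro s t hst _ ⟨τ, rfl⟩
  exact mem_range_ofSubtype fun a ha => ofSubtype_apply_of_not_mem τ fun h => ha (hst h)

end Equiv.Perm

theorem mem_finitaryPermGroup {π : Perm ℕ} :
    π ∈ finitaryPermGroup ↔ {x | π x ≠ x}.Finite :=
  Iff.rfl

theorem range_ofSubtype_le_finitaryPermGroup (s : Finset ℕ) :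
    (ofSubtype : Perm s →* Perm ℕ).range ≤ finitaryPermGroup := by
  rintro _ ⟨τ, rfl⟩
  exact mem_finitaryPermGroup.mpr <|
    s.finite_toSet.subset fun a ha => by_contra fun h => ha (ofSubtype_apply_of_not_mem τ h)

theorem finitaryPermGroup_le_iSup_range_ofSubtype :
    finitaryPermGroup ≤ ⨆ s : Finset ℕ, (ofSubtype : Perm s →* Perm ℕ).range := by
  intro π hπ
  refine Subgroup.mem_iSup_of_mem (mem_finitaryPermGroup.mp hπ).toFinset
    (mem_range_ofSubtype fun a ha => ?_)
  simpa using ha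

theorem exists_sign_eq_one_of_mem_commutator_finitaryPermGroup {π : Perm ℕ}
    (hπ : π ∈ ⁅finitaryPermGroup, finitaryPermGroup⁆) :
    ∃ (s : Finset ℕ) (σ : Perm s), sign σ = 1 ∧ ofSubtype σ = π := by
  have hmono := monotone_range_ofSubtype (α := ℕ)
  have hdir : Directed (· ≤ ·) fun s : Finset ℕ =>
      ⁅(ofSubtype : Perm s →* Perm ℕ).range, (ofSubtype : Perm s →* Perm ℕ).range⁆ :=
    Monotone.directed_le fun s t hst => Subgroup.commutator_mono (hmono hst) (hmono hst)
  have hle := Subgroup.commutator_mono finitaryPermGroup_le_iSup_range_ofSubtype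
    finitaryPermGroup_le_iSup_range_ofSubtype
  obtain ⟨s, hs⟩ := (Subgroup.mem_iSup_of_directed hdir).mp
    (Subgroup.commutator_iSup_le_of_directed hmono.directed_le (hle hπ))
  rw [← map_commutator_eq] at hs
  obtain ⟨σ, hσ, rfl⟩ := hs
  exact ⟨s, σ, alternatingGroup.commutator_perm_le hσ, rfl⟩

/-- every element of the commutator subgroup of the group `S` of finitely
supported permutations of `ℕ` is a single commutator. -/
theorem finitary_commutator_width_one
    (g : finitaryPermGroup) (hg : g ∈ commutator ↥finitaryPermGroup) :
    ∃ a b : finitaryPermGroup, g = a * b * a⁻¹ * b⁻¹ := by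
  have hg' : (g : Perm ℕ) ∈ ⁅finitaryPermGroup, finitaryPermGroup⁆ := by
    rw [← Subgroup.map_subtype_commutator]
    exact Subgroup.mem_map_of_mem _ hg
  obtain ⟨s, σ, hσ, hσg⟩ := exists_sign_eq_one_of_mem_commutator_finitaryPermGroup hg'
  obtain ⟨a, b, rfl⟩ := mem_commutatorSet_of_sign_eq_one hσ
  refine ⟨⟨ofSubtype a, range_ofSubtype_le_finitaryPermGroup s ⟨a, rfl⟩⟩,
    ⟨ofSubtype b, range_ofSubtype_le_finitaryPermGroup s ⟨b, rfl⟩⟩, Subtype.ext ?_⟩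
  rw [← hσg, map_commutatorElement, commutatorElement_def]
  rfl
end
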